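/- Weakening lemma: there is an algorithm W such that, given a PCF type T, index variables φ, a fresh index variable a and a polarity p, W(T,φ,a,p) = (A,R) where: (1) A is a dℓPCF_V type primitive for (a,φ) with skeleton ⌊A⌋ = T; (2) for every completely specified equational program E ⊇ R, φ;(Φ,a<0) ⊨^E A ≡ A holds; (3) A is p-specified by (∅,R). -/

import Mathlib

set_option autoImplicit true
set_option maxHeartbeats 1000000

namespace DlPCF

/-! ## PCF terms (de Bruijn) -/

inductive Term : Type
  | var : ℕ → Term
  | lit : ℕ → Term
  | app : Term → Term → Term
  | lam : Term → Term
  | pred : Term → Term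
  | succ : Term → Term
  | fixp : Term → Term
  | ifz : Term → Term → Term → Term

/-- Values: numerals, abstractions, fixpoints. -/
def Term.IsValue : Term → Prop
  | .lit _ => True
  | .lam _ => True
  | .fixp _ => True
  | _ => False

/-- Syntactic size of a term. -/
def Term.size : Term → ℕ
  | .var _ => 1
  | .lit _ => 1
  | .app t u => t.size + u.size + 1
  | .lam t => t.size + 1
  | .pred t => t.size + 1
  | .succ t => t.size + 1
  | .fixp t => t.size + 1
  | .ifz t u s => t.size + u.size + s.size + 1

def Term.shift (d : ℕ) : ℕ → Term → Term
  | c, .var x => if x < c then .var x else .var (x + d)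
  | _, .lit n => .lit n
  | c, .app t u => .app (t.shift d c) (u.shift d c)
  | c, .lam t => .lam (t.shift d (c+1))
  | c, .pred t => .pred (t.shift d c)
  | c, .succ t => .succ (t.shift d c)
  | c, .fixp t => .fixp (t.shift d (c+1))
  | c, .ifz t u s => .ifz (t.shift d c) (u.shift d c) (s.shift d c)

/-- `Term.subst s k t` substitutes `s` for de Bruijn variable `k` in `t`. -/
def Term.subst (s : Term) : ℕ → Term → Term
  | k, .var x => if x < k then .var x else if x = k then Term.shift k 0 s else .var (x - 1)
  | _, .lit n => .lit n
  | k, .app t u => .app (Term.subst s k t) (Term.subst s k u)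
  | k, .lam t => .lam (Term.subst s (k+1) t)
  | k, .pred t => .pred (Term.subst s k t)
  | k, .succ t => .succ (Term.subst s k t)
  | k, .fixp t => .fixp (Term.subst s (k+1) t)
  | k, .ifz t u v => .ifz (Term.subst s k t) (Term.subst s k u) (Term.subst s k v)

/-- `ClosedUnder n t`: all free variables of `t` are `< n`. -/
def ClosedUnder : ℕ → Term → Prop
  | n, .var x => x < n
  | _, .lit _ => True
  | n, .app t u => ClosedUnder n t ∧ ClosedUnder n u
  | n, .lam t => ClosedUnder (n+1) t
  | n, .pred t => ClosedUnder n t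
  | n, .succ t => ClosedUnder n t
  | n, .fixp t => ClosedUnder (n+1) t
  | n, .ifz t u s => ClosedUnder n t ∧ ClosedUnder n u ∧ ClosedUnder n s

/-- One step of (weak) call-by-value reduction. -/
inductive Red : Term → Term → Prop
  | beta {t v : Term} : v.IsValue → Red (.app (.lam t) v) (Term.subst v 0 t)
  | fix {t v : Term} : v.IsValue → Red (.app (.fixp t) v) (.app (Term.subst (.fixp t) 0 t) v)
  | predLit {n : ℕ} : Red (.pred (.lit n)) (.lit (n - 1))
  | succLit {n : ℕ} : Red (.succ (.lit n)) (.lit (n + 1))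
  | ifzZero {u s : Term} : Red (.ifz (.lit 0) u s) u
  | ifzSucc {n : ℕ} {u s : Term} : Red (.ifz (.lit (n+1)) u s) s
  | appL {t t' u : Term} : Red t t' → Red (.app t u) (.app t' u)
  | appR {t u u' : Term} : t.IsValue → Red u u' → Red (.app t u) (.app t u')
  | predC {t t' : Term} : Red t t' → Red (.pred t) (.pred t')
  | succC {t t' : Term} : Red t t' → Red (.succ t) (.succ t')
  | ifzC {t t' u s : Term} : Red t t' → Red (.ifz t u s) (.ifz t' u s)

/-! ## Index terms -/

/-- Index terms: variables (de Bruijn), numerals, `+`, `∸`, a conditional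
(the `if` function symbol with `if(0,b,c)=b`, `if(a+1,b,c)=c`), applied
function symbols (symbol, arity, arguments), bounded sums and forest
cardinalities.  In `sum I J` and `forest I J K` the last argument binds de
Bruijn index variable `0`. -/
inductive Idx : Type
  | var : ℕ → Idx
  | lit : ℕ → Idx
  | add : Idx → Idx → Idx
  | monus : Idx → Idx → Idx
  | ifz : Idx → Idx → Idx → Idx
  | func : ℕ → (k : ℕ) → (ℕ → Idx) → Idx
  | sum : Idx → Idx → Idx
  | forest : Idx → Idx → Idx → Idx

def Idx.shift (d : ℕ) : ℕ → Idx → Idx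
  | c, .var a => if a < c then .var a else .var (a + d)
  | _, .lit n => .lit n
  | c, .add I J => .add (I.shift d c) (J.shift d c)
  | c, .monus I J => .monus (I.shift d c) (J.shift d c)
  | c, .ifz I J K => .ifz (I.shift d c) (J.shift d c) (K.shift d c)
  | c, .func f k args => .func f k (fun i => (args i).shift d c)
  | c, .sum I J => .sum (I.shift d c) (J.shift d (c+1))
  | c, .forest I J K => .forest (I.shift d c) (J.shift d c) (K.shift d (c+1))

/-- `Idx.subst s k I` substitutes `s` for index variable `k` in `I`. -/
def Idx.subst (s : Idx) : ℕ → Idx → Idx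
  | k, .var a => if a < k then .var a else if a = k then Idx.shift k 0 s else .var (a - 1)
  | _, .lit n => .lit n
  | k, .add I J => .add (Idx.subst s k I) (Idx.subst s k J)
  | k, .monus I J => .monus (Idx.subst s k I) (Idx.subst s k J)
  | k, .ifz I J K => .ifz (Idx.subst s k I) (Idx.subst s k J) (Idx.subst s k K)
  | k, .func f n args => .func f n (fun i => Idx.subst s k (args i))
  | k, .sum I J => .sum (Idx.subst s k I) (Idx.subst s (k+1) J)
  | k, .forest I J K => .forest (Idx.subst s k I) (Idx.subst s k J) (Idx.subst s (k+1) K)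

/-- A rule `f(a₁,…,aₖ) := J` of an equational (rewriting) program:
symbol, arity, body (free variables of the body are `< k`). -/
abbrev Rule := ℕ × ℕ × Idx

/-- Equational programs, given as rewriting programs: lists of rules. -/
abbrev RwProg := List Rule

/-- A constraint `(I, J)` means `I ≤ J`. -/
abbrev Constr := Idx × Idx

/-- Extension of a valuation with a value for the fresh variable `0`. -/
def extV (v : ℕ) (ρ : ℕ → ℕ) : ℕ → ℕ
  | 0 => v
  | n+1 => ρ n

/-! Semantics of index terms relative to an equational program, as an
inductively defined (partial) evaluation relation.  `ForestVal E ρ K i j v`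
means `⊳^i_{a<j} K = v`. -/

mutual
inductive IdxVal (E : RwProg) : (ℕ → ℕ) → Idx → ℕ → Prop
  | var {ρ a} : IdxVal E ρ (.var a) (ρ a)
  | lit {ρ n} : IdxVal E ρ (.lit n) n
  | add {ρ I J m n} : IdxVal E ρ I m → IdxVal E ρ J n → IdxVal E ρ (.add I J) (m + n)
  | monus {ρ I J m n} : IdxVal E ρ I m → IdxVal E ρ J n → IdxVal E ρ (.monus I J) (m - n)
  | ifzZero {ρ I J K m} : IdxVal E ρ I 0 → IdxVal E ρ J m → IdxVal E ρ (.ifz I J K) m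
  | ifzSucc {ρ I J K n m} : IdxVal E ρ I (n+1) → IdxVal E ρ K m → IdxVal E ρ (.ifz I J K) m
  | func {ρ f k args J v} (vs : ℕ → ℕ) :
      (f, k, J) ∈ E →
      (∀ i < k, IdxVal E ρ (args i) (vs i)) →
      IdxVal E (fun i => if i < k then vs i else 0) J v →
      IdxVal E ρ (.func f k args) v
  | sum {ρ I J n} (g : ℕ → ℕ) :
      IdxVal E ρ I n →
      (∀ m < n, IdxVal E (extV m ρ) J (g m)) →
      IdxVal E ρ (.sum I J) (∑ m ∈ Finset.range n, g m)
  | forest {ρ I J K i j v} :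
      IdxVal E ρ I i → IdxVal E ρ J j → ForestVal E ρ K i j v →
      IdxVal E ρ (.forest I J K) v

inductive ForestVal (E : RwProg) : (ℕ → ℕ) → Idx → ℕ → ℕ → ℕ → Prop
  | zero {ρ K i} : ForestVal E ρ K i 0 0
  | succ {ρ K i j x w y} :
      ForestVal E ρ K i j x →
      IdxVal E (extV (i + x) ρ) K w →
      ForestVal E ρ K (i + 1 + x) w y →
      ForestVal E ρ K i (j+1) (x + 1 + y)
end

/-- A valuation satisfies a set of constraints. -/
def Sat (E : RwProg) (ρ : ℕ → ℕ) (Φ : List Constr) : Prop :=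
  ∀ c ∈ Φ, ∃ m n, IdxVal E ρ c.1 m ∧ IdxVal E ρ c.2 n ∧ m ≤ n

/-- Semantic judgement `φ;Φ ⊨^E I ≤ J` (`φ` is the number of index variables). -/
def SemLe (E : RwProg) (φ : ℕ) (Φ : List Constr) (I J : Idx) : Prop :=
  ∀ ρ : ℕ → ℕ, Sat E ρ Φ → ∃ m n, IdxVal E ρ I m ∧ IdxVal E ρ J n ∧ m ≤ n

/-- The constraint `I < J`, i.e. `I + 1 ≤ J`. -/
def cLt (I J : Idx) : Constr := (Idx.add I (.lit 1), J)

/-- Weakening a constraint context under a fresh index variable. -/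
def shiftCtx (Φ : List Constr) : List Constr :=
  Φ.map fun c => (Idx.shift 1 0 c.1, Idx.shift 1 0 c.2)

/-! ## dℓPCF_V types -/

mutual
/-- Linear types `σ ⊸ τ`. -/
inductive LTy : Type
  | arr : MTy → MTy → LTy
/-- Modal types `[a<I]·A` and `Nat[I,J]`.  In `modal I A`, the linear type `A`
binds index variable `0`. -/
inductive MTy : Type
  | nat : Idx → Idx → MTy
  | modal : Idx → LTy → MTy
end

mutual
def LTy.shiftL (d : ℕ) : ℕ → LTy → LTy
  | c, .arr σ τ => .arr (σ.shiftM d c) (τ.shiftM d c)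
def MTy.shiftM (d : ℕ) : ℕ → MTy → MTy
  | c, .nat I J => .nat (Idx.shift d c I) (Idx.shift d c J)
  | c, .modal I A => .modal (Idx.shift d c I) (A.shiftL d (c+1))
end

mutual
def LTy.substL (s : Idx) : ℕ → LTy → LTy
  | k, .arr σ τ => .arr (MTy.substM s k σ) (MTy.substM s k τ)
def MTy.substM (s : Idx) : ℕ → MTy → MTy
  | k, .nat I J => .nat (Idx.subst s k I) (Idx.subst s k J)
  | k, .modal I A => .modal (Idx.subst s k I) (LTy.substL s (k+1) A)
end

/-! ## Subtyping -/

mutual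
inductive SubL (E : RwProg) : ℕ → List Constr → LTy → LTy → Prop
  | arr {φ Φ σ τ υ ν} :
      SubM E φ Φ υ σ → SubM E φ Φ τ ν → SubL E φ Φ (.arr σ τ) (.arr υ ν)
inductive SubM (E : RwProg) : ℕ → List Constr → MTy → MTy → Prop
  | nat {φ Φ I J K H} :
      SemLe E φ Φ K I → SemLe E φ Φ J H → SubM E φ Φ (.nat I J) (.nat K H)
  | modal {φ Φ I J A B} :
      SubL E (φ+1) (cLt (.var 0) (Idx.shift 1 0 J) :: shiftCtx Φ) A B →
      SemLe E φ Φ J I →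
      SubM E φ Φ (.modal I A) (.modal J B)
end

/-- Type equivalence (the symmetric closure of subtyping). -/
def EquivM (E : RwProg) (φ : ℕ) (Φ : List Constr) (σ τ : MTy) : Prop :=
  SubM E φ Φ σ τ ∧ SubM E φ Φ τ σ

def EquivL (E : RwProg) (φ : ℕ) (Φ : List Constr) (A B : LTy) : Prop :=
  SubL E φ Φ A B ∧ SubL E φ Φ B A

/-! ## Sums and bounded sums of modal types -/

/-- Sum of modal types: `([a<I]·A) ⊎ ([a<J]·A{(I+a)/c}) = [c<I+J]·A`, and
`Nat[I,J] ⊎ Nat[I,J] = Nat[I,J]`. -/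
inductive MSum : MTy → MTy → MTy → Prop
  | nat (I J : Idx) : MSum (.nat I J) (.nat I J) (.nat I J)
  | modal (I J : Idx) (A : LTy) :
      MSum (.modal I A)
           (.modal J (LTy.substL (.add (Idx.shift 1 0 I) (.var 0)) 0 (LTy.shiftL 1 1 A)))
           (.modal (.add I J) A)

/-- Bounded sum of modal types over `a < I`:
if `σ = [b<J]·(A{(b + Σ_{d<a} J{d/a})/c})` then `Σ_{a<I} σ = [c<Σ_{a<I}J]·A`,
and `Σ_{a<I} Nat[J,K] = Nat[J,K]` when `a` is not free in `J`, `K`.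
The first type lives under the extra index variable `a` (de Bruijn `0`). -/
inductive MBSum (I : Idx) : MTy → MTy → Prop
  | nat (J K : Idx) : MBSum I (.nat (Idx.shift 1 0 J) (Idx.shift 1 0 K)) (.nat J K)
  | modal (J : Idx) (A : LTy) :
      MBSum I
        (.modal J (LTy.substL (.add (.var 0) (.sum (.var 1) (Idx.shift 2 1 J))) 0
          (LTy.shiftL 2 1 A)))
        (.modal (.sum I J) A)

/-- Pointwise sum of typing contexts. -/
inductive CtxSum : List MTy → List MTy → List MTy → Prop
  | nil : CtxSum [] [] []
  | cons {σ τ υ Γ Δ Θ} : MSum σ τ υ → CtxSum Γ Δ Θ → CtxSum (σ :: Γ) (τ :: Δ) (υ :: Θ)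

/-- Pointwise bounded sum of typing contexts. -/
def CtxBSum (I : Idx) : List MTy → List MTy → Prop :=
  List.Forall₂ (MBSum I)

/-! ## Typing -/

/-- The index `⊳^{b+1}_{b'<a} I + b + 1` (in scope `(a, b, φ)`) used in the
(Fix) rule; `I` lives in scope `(b, φ)`. -/
def ΨIdx (I : Idx) : Idx :=
  .add (.add (.forest (.add (.var 1) (.lit 1)) (.var 0) (Idx.shift 2 1 I)) (.var 1)) (.lit 1)

/-- The index `⊳^0_{b'<a} I` (in scope `(a, φ)`) used in the (Fix) rule. -/
def ΞIdx (I : Idx) : Idx :=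
  .forest (.lit 0) (.var 0) (Idx.shift 1 1 I)

/-- The index `H = ⊳^0_{b<K} I` of the (Fix) rule. -/
def fcH (K I : Idx) : Idx := .forest (.lit 0) K I

/-- Type derivations of dℓPCF_V (Figure 3): `Deriv E φ Φ Γ K t τ` derives the
judgement `φ;Φ ⊢^E Γ ⊢_K t : τ`. -/
inductive Deriv (E : RwProg) : ℕ → List Constr → List MTy → Idx → Term → MTy → Type
  | ax {φ : ℕ} {Φ : List Constr} {Γ : List MTy} {x : ℕ} {σ : MTy}
      (h : Γ[x]? = some σ) :
      Deriv E φ Φ Γ (.lit 0) (.var x) σ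
  | subs {φ Φ Γ Δ I J t σ τ}
      (d : Deriv E φ Φ Γ I t σ)
      (h1 : List.Forall₂ (SubM E φ Φ) Δ Γ)
      (h2 : SubM E φ Φ σ τ)
      (h3 : SemLe E φ Φ I J) :
      Deriv E φ Φ Δ J t τ
  | lit {φ Φ} {Γ : List MTy} (n : ℕ) :
      Deriv E φ Φ Γ (.lit 0) (.lit n) (.nat (.lit n) (.lit n))
  | succ {φ Φ Γ M t I J}
      (d : Deriv E φ Φ Γ M t (.nat I J)) :
      Deriv E φ Φ Γ M (.succ t) (.nat (.add I (.lit 1)) (.add J (.lit 1)))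
  | pred {φ Φ Γ M t I J}
      (d : Deriv E φ Φ Γ M t (.nat I J)) :
      Deriv E φ Φ Γ M (.pred t) (.nat (.monus I (.lit 1)) (.monus J (.lit 1)))
  | ifz {φ Φ Γ Δ Θ M N t u s J K τ}
      (d0 : Deriv E φ Φ Γ M t (.nat J K))
      (d1 : Deriv E φ ((J, Idx.lit 0) :: Φ) Δ N u τ)
      (d2 : Deriv E φ ((Idx.lit 1, K) :: Φ) Δ N s τ)
      (hs : CtxSum Γ Δ Θ) :
      Deriv E φ Φ Θ (.add M N) (.ifz t u s) τ
  | app {φ Φ Γ Δ Θ K H t u σ τ}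
      (d1 : Deriv E φ Φ Γ K t (.modal (.lit 1) (.arr σ τ)))
      (d2 : Deriv E φ Φ Δ H u (MTy.substM (.lit 0) 0 σ))
      (hs : CtxSum Γ Δ Θ) :
      Deriv E φ Φ Θ (.add K H) (.app t u) (MTy.substM (.lit 0) 0 τ)
  | lam {φ Φ Γ Γ' I K t σ τ}
      (d : Deriv E (φ+1) (cLt (.var 0) (Idx.shift 1 0 I) :: shiftCtx Φ) (σ :: Γ) K t τ)
      (hb : CtxBSum I Γ Γ') :
      Deriv E φ Φ Γ' (.add I (.sum I K)) (.lam t) (.modal I (.arr σ τ))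
  | fix {φ Φ Γ Γ' I K J t A B}
      (d : Deriv E (φ+1) (cLt (.var 0) (Idx.shift 1 0 (fcH K I)) :: shiftCtx Φ)
        ((MTy.modal I A) :: Γ) J t (.modal (.lit 1) B))
      (hsub : SubL E (φ+2)
        (cLt (.var 0) (Idx.shift 1 0 I) ::
          cLt (.var 1) (Idx.shift 2 0 (fcH K I)) :: shiftCtx (shiftCtx Φ))
        (LTy.substL (ΨIdx I) 0 (LTy.shiftL 2 1 (LTy.substL (.lit 0) 0 B))) A)
      (hb : CtxBSum (fcH K I) Γ Γ') :
      Deriv E φ Φ Γ' (.add (fcH K I) (.sum (fcH K I) J)) (.fixp t)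
        (.modal K (LTy.substL (ΞIdx I) 0 (LTy.shiftL 1 1 (LTy.substL (.lit 0) 0 B))))

/-- Derivability of a dℓPCF_V typing judgement. -/
def Typing (E : RwProg) (φ : ℕ) (Φ : List Constr) (Γ : List MTy) (I : Idx)
    (t : Term) (τ : MTy) : Prop :=
  Nonempty (Deriv E φ Φ Γ I t τ)

/-- A derivable judgement is precise (Definition 1). -/
def Precise (E : RwProg) (φ : ℕ) (Φ : List Constr) (Γ : List MTy) (I : Idx)
    (t : Term) (σ : MTy) : Prop :=
  ∀ Δ J τ, Typing E φ Φ Δ J t τ →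
    List.Forall₂ (SubM E φ Φ) Δ Γ ∧ SubM E φ Φ σ τ ∧ SemLe E φ Φ I J

/-! ## The CEK machine -/

mutual
/-- Closures: a term with an environment. -/
inductive Clo : Type
  | mk : Term → Env → Clo
/-- Environments, binding de Bruijn term variables to (value) closures. -/
inductive Env : Type
  | nil : Env
  | cons : Clo → Env → Env
end

def Env.lookup : Env → ℕ → Option Clo
  | .nil, _ => none
  | .cons c _, 0 => some c
  | .cons _ ξ, n+1 => ξ.lookup n

/-- Stacks of the CEK machine. -/
inductive Stk : Type
  | nil : Stk
  | arg : Clo → Stk → Stk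
  | fn : Clo → Stk → Stk
  | sk : Stk → Stk
  | pk : Stk → Stk
  | ifk : Term → Term → Env → Stk → Stk

/-- One CEK transition; the boolean flag is `true` exactly on instantiation
steps (resolution of a variable through the environment). -/
inductive Step : Bool → Clo × Stk → Clo × Stk → Prop
  | app {t u ξ π} :
      Step false (⟨.mk (.app t u) ξ, π⟩) (⟨.mk t ξ, .arg (.mk u ξ) π⟩)
  | argv {v ξ c π} : Term.IsValue v →
      Step false (⟨.mk v ξ, .arg c π⟩) (⟨c, .fn (.mk v ξ) π⟩)
  | betav {v ξ t ξ' π} : Term.IsValue v →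
      Step false (⟨.mk v ξ, .fn (.mk (.lam t) ξ') π⟩) (⟨.mk t (.cons (.mk v ξ) ξ'), π⟩)
  | fixv {v ξ t ξ' π} : Term.IsValue v →
      Step false (⟨.mk v ξ, .fn (.mk (.fixp t) ξ') π⟩)
        (⟨.mk t (.cons (.mk (.fixp t) ξ') ξ'), .arg (.mk v ξ) π⟩)
  | var {x ξ c π} : Env.lookup ξ x = some c →
      Step true (⟨.mk (.var x) ξ, π⟩) (⟨c, π⟩)
  | ifz {t u s ξ π} :
      Step false (⟨.mk (.ifz t u s) ξ, π⟩) (⟨.mk t ξ, .ifk u s ξ π⟩)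
  | ifz0 {ξ' u s ξ π} :
      Step false (⟨.mk (.lit 0) ξ', .ifk u s ξ π⟩) (⟨.mk u ξ, π⟩)
  | ifzS {n ξ' u s ξ π} :
      Step false (⟨.mk (.lit (n+1)) ξ', .ifk u s ξ π⟩) (⟨.mk s ξ, π⟩)
  | succ {t ξ π} :
      Step false (⟨.mk (.succ t) ξ, π⟩) (⟨.mk t ξ, .sk π⟩)
  | pred {t ξ π} :
      Step false (⟨.mk (.pred t) ξ, π⟩) (⟨.mk t ξ, .pk π⟩)
  | sklit {n ξ π} :
      Step false (⟨.mk (.lit n) ξ, .sk π⟩) (⟨.mk (.lit (n+1)) .nil, π⟩)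
  | pklit {n ξ π} :
      Step false (⟨.mk (.lit n) ξ, .pk π⟩) (⟨.mk (.lit (n-1)) .nil, π⟩)

/-- `Steps k i p q`: the machine goes from `p` to `q` in `k` steps, `i` of
which are instantiation steps. -/
inductive Steps : ℕ → ℕ → Clo × Stk → Clo × Stk → Prop
  | refl {p} : Steps 0 0 p p
  | step {b p q r k i} : Step b p q → Steps k i q r →
      Steps (k+1) (cond b (i+1) i) p r

/-- `t ⇓ᵏᵥ v`: the CEK machine, started on `t` with empty environment and
stack, reaches `(v, ξ) ⋆ ε` in `k` steps. -/
def Eval (t : Term) (k : ℕ) (v : Term) : Prop :=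
  ∃ i ξ, Steps k i (⟨.mk t .nil, .nil⟩) (⟨.mk v ξ, .nil⟩)

/-- `E` is universal: every partial recursive function is representable by an
index term over `E`. -/
def Universal (E : RwProg) : Prop :=
  ∀ f : ℕ →. ℕ, Nat.Partrec f →
    ∃ I : Idx, ∀ n m, m ∈ f n ↔ IdxVal E (fun _ => n) I m

/-! ## PCF types, skeletons and PCF derivations -/

inductive PTy : Type
  | nat : PTy
  | arr : PTy → PTy → PTy

mutual
/-- The skeleton of a linear type. -/
def LTy.skel : LTy → PTy
  | .arr σ τ => .arr σ.skel τ.skel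
/-- The skeleton of a modal type. -/
def MTy.skel : MTy → PTy
  | .nat _ _ => .nat
  | .modal _ A => A.skel
end

/-- Simply-typed PCF derivations. -/
inductive PDeriv : List PTy → Term → PTy → Type
  | var {Γ : List PTy} {x : ℕ} {T : PTy} (h : Γ[x]? = some T) : PDeriv Γ (.var x) T
  | lit {Γ : List PTy} (n : ℕ) : PDeriv Γ (.lit n) .nat
  | app {Γ t u U T} : PDeriv Γ t (.arr U T) → PDeriv Γ u U → PDeriv Γ (.app t u) T
  | lam {Γ t U T} : PDeriv (U :: Γ) t T → PDeriv Γ (.lam t) (.arr U T)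
  | succ {Γ t} : PDeriv Γ t .nat → PDeriv Γ (.succ t) .nat
  | pred {Γ t} : PDeriv Γ t .nat → PDeriv Γ (.pred t) .nat
  | fixp {Γ t T} : PDeriv (T :: Γ) t T → PDeriv Γ (.fixp t) T
  | ifz {Γ t u s T} : PDeriv Γ t .nat → PDeriv Γ u T → PDeriv Γ s T →
      PDeriv Γ (.ifz t u s) T

/-! ## Symbols, rewriting programs, specification -/

/-- Occurrence of a function symbol in an index term. -/
inductive OccursIn (g : ℕ) : Idx → Prop
  | addL {I J} : OccursIn g I → OccursIn g (.add I J)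
  | addR {I J} : OccursIn g J → OccursIn g (.add I J)
  | monusL {I J} : OccursIn g I → OccursIn g (.monus I J)
  | monusR {I J} : OccursIn g J → OccursIn g (.monus I J)
  | ifz1 {I J K} : OccursIn g I → OccursIn g (.ifz I J K)
  | ifz2 {I J K} : OccursIn g J → OccursIn g (.ifz I J K)
  | ifz3 {I J K} : OccursIn g K → OccursIn g (.ifz I J K)
  | funcHead {k args} : OccursIn g (.func g k args)
  | funcArg {f k args i} : i < k → OccursIn g (args i) → OccursIn g (.func f k args)
  | sumL {I J} : OccursIn g I → OccursIn g (.sum I J)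
  | sumR {I J} : OccursIn g J → OccursIn g (.sum I J)
  | forest1 {I J K} : OccursIn g I → OccursIn g (.forest I J K)
  | forest2 {I J K} : OccursIn g J → OccursIn g (.forest I J K)
  | forest3 {I J K} : OccursIn g K → OccursIn g (.forest I J K)

/-- `f` has no rule in `R`. -/
def Unspecified (R : RwProg) (f : ℕ) : Prop := ∀ r ∈ R, r.1 ≠ f

/-- `f` is `S`-specified by `R`: there is a rule `f(⋯) := J` in `R` such that
every symbol occurring in `J` is `f` itself, or in `S`, or
`(S ∪ {f})`-specified by `R` minus that rule. -/
inductive Specified : RwProg → Set ℕ → ℕ → Prop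
  | intro {R₁ R₂ : RwProg} {S : Set ℕ} {f k : ℕ} {J : Idx}
      (h : ∀ g, OccursIn g J → g ≠ f → g ∉ S → Specified (R₁ ++ R₂) (insert f S) g) :
      Specified (R₁ ++ (f, k, J) :: R₂) S f

/-- Every symbol occurring in the program has a defining rule:
`E` is completely specified. -/
def CompSpec (E : RwProg) : Prop :=
  ∀ r ∈ E, ∀ g, OccursIn g r.2.2 → ∃ k J, (g, k, J) ∈ E

/-- `R` is included in `E`. -/
def Subprog (R E : RwProg) : Prop := ∀ r ∈ R, r ∈ E

/-- An interpretation `M : E ⊨ R`: extra rules for the unspecified symbols of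
`R`, whose bodies are over the signature of `E`. -/
def Interp (M E R : RwProg) : Prop :=
  ∀ r ∈ M, Unspecified R r.1 ∧ ∀ g, OccursIn g r.2.2 → ∃ k J, (g, k, J) ∈ E

/-- A side condition `φ;Φ ⊨ H↓`. -/
abbrev SideCond := ℕ × List Constr × Idx

/-- Validity of a side condition for `E`. -/
def SCValid (E : RwProg) (c : SideCond) : Prop :=
  ∀ ρ : ℕ → ℕ, Sat E ρ c.2.1 → ∃ v, IdxVal E ρ c.2.2 v

def SCSValid (E : RwProg) (𝒞 : List SideCond) : Prop :=
  ∀ c ∈ 𝒞, SCValid E c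

/-! ## Positive and negative symbols, primitive types -/

/-- The head symbol of an index term, if any. -/
def headSet : Idx → Set ℕ
  | .func f _ _ => {f}
  | _ => ∅

mutual
def SPosM : MTy → Set ℕ
  | .nat I _ => headSet I
  | .modal _ A => SPosL A
def SNegM : MTy → Set ℕ
  | .nat _ _ => ∅
  | .modal I A => headSet I ∪ SNegL A
def SPosL : LTy → Set ℕ
  | .arr σ τ => SNegM σ ∪ SPosM τ
def SNegL : LTy → Set ℕ
  | .arr σ τ => SPosM σ ∪ SNegM τ
end

/-- Symbols of a given polarity (`true` = positive). -/
def SPol (p : Bool) (σ : MTy) : Set ℕ := if p then SPosM σ else SNegM σ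

def SPolL (p : Bool) (A : LTy) : Set ℕ := if p then SPosL A else SNegL A

mutual
/-- Primitive linear types for `n` index variables. -/
inductive PrimL : ℕ → LTy → Prop
  | arr {n σ τ} : PrimM n σ → PrimM n τ → PrimL n (.arr σ τ)
/-- Primitive modal types for `n` index variables: `Nat[f(φ)]` or
`[a<f(φ)]·A` with `A` primitive for `(a,φ)`. -/
inductive PrimM : ℕ → MTy → Prop
  | nat {n f} : PrimM n (.nat (.func f n Idx.var) (.func f n Idx.var))
  | modal {n f A} : PrimL (n+1) A → PrimM n (.modal (.func f n Idx.var) A)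
end

/-- A (primitive) modal type is `p`-specified by `(S, R)`. -/
def PSpec (p : Bool) (σ : MTy) (S : Set ℕ) (R : RwProg) : Prop :=
  (∀ f ∈ SPol p σ, Specified R S f) ∧ (∀ f ∈ SPol (!p) σ, Unspecified R f)

def PSpecL (p : Bool) (A : LTy) (S : Set ℕ) (R : RwProg) : Prop :=
  (∀ f ∈ SPolL p A, Specified R S f) ∧ (∀ f ∈ SPolL (!p) A, Unspecified R f)

/-! ## The type inference algorithm: interface -/

/-- Output of the type-inference algorithm: a context, a weight, a type,
a rewriting program and a set of side conditions. -/
abbrev TOut := List MTy × Idx × MTy × RwProg × List SideCond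

/-- Type of the type-inference algorithm `𝒯`. -/
abbrev TAlg := ∀ (_φ : ℕ) (_Φ : List Constr) {Γ : List PTy} {t : Term} {T : PTy},
  PDeriv Γ t T → TOut

/-- The set of negative symbols of a judgement `Γ ⊢ t : τ`. -/
def NegSymsJ (Γ : List MTy) (τ : MTy) : Set ℕ :=
  {f | (∃ σ ∈ Γ, f ∈ SPosM σ) ∨ f ∈ SNegM τ}

/-- The judgement `φ;Φ ⊢^R Γ ⊢_I t : τ` is correctly specified. -/
def CorrSpec (φ : ℕ) (R : RwProg) (Γ : List MTy) (I : Idx) (τ : MTy) : Prop :=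
  PrimM φ τ ∧ (∀ σ ∈ Γ, PrimM φ σ) ∧
  PSpec true τ (NegSymsJ Γ τ) R ∧
  (∀ σ ∈ Γ, PSpec false σ (NegSymsJ Γ τ) R) ∧
  (∀ f, OccursIn f I → Specified R (NegSymsJ Γ τ) f)

end DlPCF
namespace DlPCF

/-!
Every `Nat` and every modality of the generated type gets its own fresh function symbol applied
to all index variables in scope. The symbols of polarity `p` receive the rule `f(φ) := 0` and
the others none; freshness keeps the two sets apart, which is what `p`-specification asks for.
The equivalence `A ≡ A` holds because the constraint `a < 0` makes the context unsatisfiable,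
and a shifted copy of it stays in the context under every modality that subtyping crosses.
-/

def HasVarLtZero (Φ : List Constr) : Prop :=
  ∃ k, cLt (.var k) (.lit 0) ∈ Φ

theorem HasVarLtZero.cons_shiftCtx {Φ : List Constr} (h : HasVarLtZero Φ) (c : Constr) :
    HasVarLtZero (c :: shiftCtx Φ) := by
  obtain ⟨k, hk⟩ := h
  refine ⟨k + 1, List.mem_cons_of_mem _ (List.mem_map.2 ⟨_, hk, ?_⟩)⟩
  simp [cLt, Idx.shift]

theorem HasVarLtZero.semLe {Φ : List Constr} (h : HasVarLtZero Φ) (E : RwProg) (φ : ℕ)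
    (I J : Idx) : SemLe E φ Φ I J := by
  obtain ⟨k, hk⟩ := h
  intro ρ hρ
  obtain ⟨m, n, hm, hn, hle⟩ := hρ _ hk
  cases hn
  cases hm with
  | add _ hone => cases hone; omega

mutual
theorem HasVarLtZero.subM_refl {Φ : List Constr} (h : HasVarLtZero Φ) (E : RwProg) (φ : ℕ) :
    ∀ σ : MTy, SubM E φ Φ σ σ
  | .nat _ _ => .nat (h.semLe E φ _ _) (h.semLe E φ _ _)
  | .modal _ A => .modal ((h.cons_shiftCtx _).subL_refl E (φ+1) A) (h.semLe E φ _ _)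
theorem HasVarLtZero.subL_refl {Φ : List Constr} (h : HasVarLtZero Φ) (E : RwProg) (φ : ℕ) :
    ∀ A : LTy, SubL E φ Φ A A
  | .arr σ τ => .arr (h.subM_refl E φ σ) (h.subM_refl E φ τ)
end

theorem Specified.of_mem_zero {R : RwProg} {f k : ℕ} (h : (f, k, Idx.lit 0) ∈ R) (S : Set ℕ) :
    Specified R S f := by
  obtain ⟨R₁, R₂, rfl⟩ := List.append_of_mem h
  exact Specified.intro fun g hg => nomatch hg

theorem unspecified_append {R R' : RwProg} {f : ℕ} :
    Unspecified (R ++ R') f ↔ Unspecified R f ∧ Unspecified R' f := by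
  simp only [Unspecified, List.mem_append, or_imp, forall_and]

theorem unspecified_of_head_mem {R : RwProg} {s : Set ℕ} {f : ℕ} (hR : ∀ r ∈ R, r.1 ∈ s)
    (hf : f ∉ s) : Unspecified R f :=
  fun r hr hrf => hf (hrf ▸ hR r hr)

theorem SPol_modal_arr (q : Bool) (h n : ℕ) (σ τ : MTy) :
    SPol q (.modal (.func h n .var) (.arr σ τ)) =
      (if q then ∅ else {h}) ∪ SPol (!q) σ ∪ SPol q τ := by
  cases q <;> simp [SPol, SPosM, SNegM, SPosL, SNegL, headSet, Set.insert_union]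

def zeroRule (b : Bool) (f k : ℕ) : RwProg := if b then [(f, k, .lit 0)] else []

/-- `c` is the first unused function symbol; the last component of the result is the next one. -/
def weakType : PTy → ℕ → ℕ → Bool → MTy × RwProg × ℕ
  | .nat, φ, c, p => (.nat (.func c (φ+1) .var) (.func c (φ+1) .var), zeroRule p c (φ+1), c + 1)
  | .arr U V, φ, c, p =>
      let gU := weakType U (φ+1) c (!p)
      let gV := weakType V (φ+1) gU.2.2 p
      (.modal (.func gV.2.2 (φ+1) .var) (.arr gU.1 gV.1),
        zeroRule (!p) gV.2.2 (φ+1) ++ (gU.2.1 ++ gV.2.1), gV.2.2 + 1)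

theorem primM_weakType (T : PTy) (φ c : ℕ) (p : Bool) : PrimM (φ+1) (weakType T φ c p).1 := by
  induction T generalizing φ c p with
  | nat => exact .nat
  | arr U V ihU ihV => exact .modal (.arr (ihU ..) (ihV ..))

theorem skel_weakType (T : PTy) (φ c : ℕ) (p : Bool) : (weakType T φ c p).1.skel = T := by
  induction T generalizing φ c p with
  | nat => rfl
  | arr U V ihU ihV => simp [weakType, MTy.skel, LTy.skel, ihU, ihV]

structure FreshSpec (p : Bool) (c c' : ℕ) (A : MTy) (R : RwProg) : Prop where
  le : c ≤ c'
  sym_mem : ∀ q, ∀ f ∈ SPol q A, f ∈ Set.Ico c c'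
  head_mem : ∀ r ∈ R, r.1 ∈ Set.Ico c c'
  zero_rule : ∀ f ∈ SPol p A, ∃ k, (f, k, Idx.lit 0) ∈ R
  unspecified : ∀ f ∈ SPol (!p) A, Unspecified R f

theorem freshSpec_nat (p : Bool) (c n : ℕ) :
    FreshSpec p c (c+1) (.nat (.func c n .var) (.func c n .var)) (zeroRule p c n) where
  le := c.le_succ
  sym_mem q f hf := by cases q <;> simp_all [SPol, SPosM, SNegM, headSet]
  head_mem r hr := by cases p <;> simp_all [zeroRule]
  zero_rule f hf := by cases p <;> simp_all [SPol, SPosM, SNegM, headSet, zeroRule]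
  unspecified f hf := by cases p <;> simp_all [SPol, SPosM, SNegM, headSet, zeroRule, Unspecified]

theorem FreshSpec.modal_arr {p : Bool} {c c₁ c₂ n : ℕ} {σ τ : MTy} {R₁ R₂ : RwProg}
    (hσ : FreshSpec (!p) c c₁ σ R₁) (hτ : FreshSpec p c₁ c₂ τ R₂) :
    FreshSpec p c (c₂+1) (.modal (.func c₂ n .var) (.arr σ τ))
      (zeroRule (!p) c₂ n ++ (R₁ ++ R₂)) := by
  have h₁ := hσ.le
  have h₂ := hτ.le
  have hhead : ∀ r ∈ zeroRule (!p) c₂ n, r.1 ∈ ({c₂} : Set ℕ) := by cases p <;> simp [zeroRule]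
  refine ⟨by omega, fun q f hf => ?_, fun r hr => ?_, fun f hf => ?_, fun f hf => ?_⟩
  · rw [SPol_modal_arr] at hf
    rcases hf with (hf | hf) | hf
    · obtain rfl : f = c₂ := by cases q <;> simp_all
      simp only [Set.mem_Ico]; omega
    · have := hσ.sym_mem _ f hf; simp only [Set.mem_Ico] at this ⊢; omega
    · have := hτ.sym_mem _ f hf; simp only [Set.mem_Ico] at this ⊢; omega
  · simp only [List.mem_append] at hr
    rcases hr with hr | hr | hr
    · have := hhead r hr; simp only [Set.mem_singleton_iff, Set.mem_Ico] at this ⊢; omega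
    · have := hσ.head_mem r hr; simp only [Set.mem_Ico] at this ⊢; omega
    · have := hτ.head_mem r hr; simp only [Set.mem_Ico] at this ⊢; omega
  · rw [SPol_modal_arr] at hf
    rcases hf with (hf | hf) | hf
    · cases p <;> simp_all [zeroRule]
    · obtain ⟨k, hk⟩ := hσ.zero_rule f hf; exact ⟨k, by simp [hk]⟩
    · obtain ⟨k, hk⟩ := hτ.zero_rule f hf; exact ⟨k, by simp [hk]⟩
  · rw [SPol_modal_arr] at hf
    simp only [unspecified_append]
    rcases hf with (hf | hf) | hf
    · obtain ⟨rfl, rfl⟩ : p = true ∧ f = c₂ := by cases p <;> simp_all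
      refine ⟨by simp [zeroRule, Unspecified], unspecified_of_head_mem hσ.head_mem ?_,
        unspecified_of_head_mem hτ.head_mem ?_⟩ <;> simp only [Set.mem_Ico] <;> omega
    · have := hσ.sym_mem _ f hf
      simp only [Set.mem_Ico] at this
      refine ⟨unspecified_of_head_mem hhead ?_, hσ.unspecified f hf,
        unspecified_of_head_mem hτ.head_mem ?_⟩ <;> simp only [Set.mem_Ico, Set.mem_singleton_iff] <;> omega
    · have := hτ.sym_mem _ f hf
      simp only [Set.mem_Ico] at this
      refine ⟨unspecified_of_head_mem hhead ?_, unspecified_of_head_mem hσ.head_mem ?_,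
        hτ.unspecified f hf⟩ <;> simp only [Set.mem_Ico, Set.mem_singleton_iff] <;> omega

theorem freshSpec_weakType (T : PTy) (φ c : ℕ) (p : Bool) :
    FreshSpec p c (weakType T φ c p).2.2 (weakType T φ c p).1 (weakType T φ c p).2.1 := by
  induction T generalizing φ c p with
  | nat => exact freshSpec_nat p c (φ+1)
  | arr U V ihU ihV => exact (ihU ..).modal_arr (ihV ..)

/-- **Weakening lemma**: there is an algorithm `W` which, given a PCF type `T`,
index variables `φ`, a fresh index variable `a` and a polarity `p`, produces a
dℓPCF_V type `A` primitive for `(a,φ)` with skeleton `T` such that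
`φ;(Φ,a<0) ⊨^E A ≡ A` for every completely specified `E ⊇ R`, and `A` is
`p`-specified by `(∅,R)`. -/
theorem weakening :
    ∃ W : PTy → ℕ → Bool → MTy × RwProg,
      ∀ (T : PTy) (φ : ℕ) (p : Bool) (A : MTy) (R : RwProg), W T φ p = (A, R) →
        (PrimM (φ+1) A ∧ MTy.skel A = T) ∧
        (∀ E, CompSpec E → Subprog R E → ∀ Φ : List Constr,
          EquivM E (φ+1) (cLt (.var 0) (.lit 0) :: shiftCtx Φ) A A) ∧
        PSpec p A ∅ R := by
  refine ⟨fun T φ p => ((weakType T φ 0 p).1, (weakType T φ 0 p).2.1), ?_⟩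
  rintro T φ p A R hW
  obtain ⟨rfl, rfl⟩ := Prod.mk.inj hW
  have hspec := freshSpec_weakType T φ 0 p
  refine ⟨⟨primM_weakType T φ 0 p, skel_weakType T φ 0 p⟩, fun E _ _ Φ => ?_,
    fun f hf => ?_, hspec.unspecified⟩
  · have h : HasVarLtZero (cLt (.var 0) (.lit 0) :: shiftCtx Φ) := ⟨0, List.mem_cons_self⟩
    exact ⟨h.subM_refl E _ _, h.subM_refl E _ _⟩
  · obtain ⟨k, hk⟩ := hspec.zero_rule f hf
    exact Specified.of_mem_zero hk ∅

end DlPCF
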